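/- Under assumptions (H) on the perturbed dynamical system, suppose B := B(0,1) ∩ E (the intersection of the open unit ball with E) has positive Lebesgue measure. Then θ₂' := inf_{x∈B} P_1 1_B(x) is strictly positive, and for every n ≥ 1 and every x ∈ B one has P_n 1_B(x) ≥ (θ₂')^n. -/

import Mathlib

/-!
On `B = B(0,1) ∩ E` the map `F` is bounded and `G ≥ g₀ > 0`, so for `x ∈ B` the increments `z`
with `F x + z ∈ B` stay in a fixed ball, on which the Gaussian density is at least some `ε > 0`;
hence `P₁ 1_B ≥ g₀ ε |B| > 0` on `B` and `θ := inf_B P₁ 1_B > 0`. As `P₁ 1_B ≥ 0`, the inequality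
`θ · 1_B ≤ P₁ 1_B` holds everywhere, and positivity and linearity of `P₁` iterate it to
`θⁿ · 1_B ≤ Pₙ 1_B`.

Since `P₁` is a Bochner integral, each comparison needs the larger integrand to be integrable.
The drift condition gives `‖F x‖ ≤ ‖x‖ + c`, so with `G ≤ C e^{‖x‖}` and the exponential moments
of the Gaussian, every `Pₙ 1_B` has at most exponential growth.
-/

open MeasureTheory Set

noncomputable section

variable {d : ℕ}

/-- The law of a (possibly non-centered) nondegenerate Gaussian random vector on `ℝ^d`:
it has a density with mean `m` and positive-definite covariance matrix `Cov` with
respect to the Lebesgue measure. -/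
def IsNondegGaussian (γ : Measure (EuclideanSpace ℝ (Fin d))) : Prop :=
  ∃ (m : EuclideanSpace ℝ (Fin d)) (Cov : Matrix (Fin d) (Fin d) ℝ), Cov.PosDef ∧
    γ = volume.withDensity (fun z => ENNReal.ofReal
      ((Real.sqrt ((2 * Real.pi) ^ d * Cov.det))⁻¹ *
        Real.exp (-(∑ i, ∑ j, (z i - m i) * Cov⁻¹ i j * (z j - m j)) / 2)))

/-- One step of the Feynman–Kac semigroup associated with the perturbed dynamical
system `X_{n+1} = F(X_n) + ξ_n` (noise law `γ`), penalization `G` and domain `Edom`: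
`P_1 f(x) = ∫ G(F(x)+z) 1_{Edom}(F(x)+z) f(F(x)+z) γ(dz)`. -/
def FKstep (Edom : Set (EuclideanSpace ℝ (Fin d)))
    (F : EuclideanSpace ℝ (Fin d) → EuclideanSpace ℝ (Fin d))
    (G : EuclideanSpace ℝ (Fin d) → ℝ) (γ : Measure (EuclideanSpace ℝ (Fin d)))
    (f : EuclideanSpace ℝ (Fin d) → ℝ) (x : EuclideanSpace ℝ (Fin d)) : ℝ :=
  ∫ z, Edom.indicator (fun y => G y * f y) (F x + z) ∂γ

/-- The Feynman–Kac semigroup: `P_0 = Id`, `P_n = (P_1)^n`. -/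
def FK (Edom : Set (EuclideanSpace ℝ (Fin d)))
    (F : EuclideanSpace ℝ (Fin d) → EuclideanSpace ℝ (Fin d))
    (G : EuclideanSpace ℝ (Fin d) → ℝ) (γ : Measure (EuclideanSpace ℝ (Fin d))) :
    ℕ → (EuclideanSpace ℝ (Fin d) → ℝ) → EuclideanSpace ℝ (Fin d) → ℝ :=
  fun n => (FKstep Edom F G γ)^[n]

section ExpGrowth

variable {E : Type*} [NormedAddCommGroup E]

def HasExpGrowth (f : E → ℝ) : Prop :=
  ∃ D a : ℝ, 0 ≤ D ∧ 0 ≤ a ∧ ∀ y, |f y| ≤ D * Real.exp (a * ‖y‖)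

lemma hasExpGrowth_const (c : ℝ) : HasExpGrowth fun _ : E => c :=
  ⟨|c|, 0, abs_nonneg c, le_rfl, fun _ => by simp⟩

lemma hasExpGrowth_indicator_of_le {s : Set E} {g : E → ℝ} {C : ℝ} (hC : 0 ≤ C)
    (hg0 : ∀ x ∈ s, 0 ≤ g x) (hg : ∀ x ∈ s, g x ≤ C * Real.exp ‖x‖) :
    HasExpGrowth (s.indicator g) := by
  refine ⟨C, 1, hC, zero_le_one, fun y => ?_⟩
  by_cases hy : y ∈ s
  · simpa [hy, abs_of_nonneg (hg0 y hy)] using hg y hy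
  · simp only [indicator_of_notMem hy, abs_zero]
    positivity

namespace HasExpGrowth

variable {f g : E → ℝ}

lemma indicator (hf : HasExpGrowth f) (s : Set E) : HasExpGrowth (s.indicator f) := by
  obtain ⟨D, a, hD, ha, hb⟩ := hf
  refine ⟨D, a, hD, ha, fun y => ?_⟩
  by_cases hy : y ∈ s
  · simpa [hy] using hb y
  · simp only [indicator_of_notMem hy, abs_zero]
    positivity

lemma mul (hf : HasExpGrowth f) (hg : HasExpGrowth g) : HasExpGrowth fun y => f y * g y := by
  obtain ⟨D, a, hD, ha, hfb⟩ := hf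
  obtain ⟨D', a', hD', ha', hgb⟩ := hg
  refine ⟨D * D', a + a', by positivity, by positivity, fun y => ?_⟩
  calc |f y * g y| = |f y| * |g y| := abs_mul _ _
    _ ≤ D * Real.exp (a * ‖y‖) * (D' * Real.exp (a' * ‖y‖)) :=
      mul_le_mul (hfb y) (hgb y) (abs_nonneg _) (by positivity)
    _ = D * D' * Real.exp ((a + a') * ‖y‖) := by rw [add_mul, Real.exp_add]; ring

lemma indicator_mul {s : Set E} (hg : HasExpGrowth (s.indicator g)) (hf : HasExpGrowth f) :
    HasExpGrowth (s.indicator fun y => g y * f y) := by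
  simpa only [← indicator_mul_left] using hg.mul hf

lemma comp_of_norm_le (hf : HasExpGrowth f) {F : E → E} {c : ℝ}
    (hF : ∀ x, ‖F x‖ ≤ ‖x‖ + c) : HasExpGrowth fun x => f (F x) := by
  obtain ⟨D, a, hD, ha, hb⟩ := hf
  refine ⟨D * Real.exp (a * c), a, by positivity, ha, fun x => ?_⟩
  calc |f (F x)| ≤ D * Real.exp (a * ‖F x‖) := hb _
    _ ≤ D * Real.exp (a * (‖x‖ + c)) := by gcongr; exact hF x
    _ = D * Real.exp (a * c) * Real.exp (a * ‖x‖) := by rw [mul_add, Real.exp_add]; ring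

lemma exists_abs_comp_add_le (hf : HasExpGrowth f) :
    ∃ D a : ℝ, 0 ≤ D ∧ 0 ≤ a ∧
      ∀ v z, |f (v + z)| ≤ D * Real.exp (a * ‖v‖) * Real.exp (a * ‖z‖) := by
  obtain ⟨D, a, hD, ha, hb⟩ := hf
  refine ⟨D, a, hD, ha, fun v z => ?_⟩
  calc |f (v + z)| ≤ D * Real.exp (a * ‖v + z‖) := hb _
    _ ≤ D * Real.exp (a * (‖v‖ + ‖z‖)) := by gcongr; exact norm_add_le v z
    _ = D * Real.exp (a * ‖v‖) * Real.exp (a * ‖z‖) := by rw [mul_add, Real.exp_add]; ring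

variable [MeasurableSpace E] {μ : Measure E}

lemma integrable_comp_add [MeasurableAdd E]
    (hμ : ∀ k : ℝ, Integrable (fun z => Real.exp (k * ‖z‖)) μ) (hfm : Measurable f)
    (hf : HasExpGrowth f) (v : E) : Integrable (fun z => f (v + z)) μ := by
  obtain ⟨D, a, -, -, hb⟩ := hf.exists_abs_comp_add_le
  exact ((hμ a).const_mul _).mono' (hfm.comp (measurable_const_add v)).aestronglyMeasurable
    (ae_of_all _ (hb v))

lemma integral_comp_add (hμ : ∀ k : ℝ, Integrable (fun z => Real.exp (k * ‖z‖)) μ)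
    (hf : HasExpGrowth f) : HasExpGrowth fun v => ∫ z, f (v + z) ∂μ := by
  obtain ⟨D, a, hD, ha, hb⟩ := hf.exists_abs_comp_add_le
  have hM : 0 ≤ ∫ z, Real.exp (a * ‖z‖) ∂μ := integral_nonneg fun _ => (Real.exp_pos _).le
  refine ⟨D * ∫ z, Real.exp (a * ‖z‖) ∂μ, a, by positivity, ha, fun v => ?_⟩
  have hint := norm_integral_le_of_norm_le (f := fun z => f (v + z))
    ((hμ a).const_mul (D * Real.exp (a * ‖v‖))) (ae_of_all _ (hb v))
  rw [Real.norm_eq_abs, integral_const_mul] at hint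
  linarith

end HasExpGrowth

lemma measurable_integral_comp_add [MeasurableSpace E] [MeasurableAdd₂ E] {μ : Measure E}
    [SFinite μ] {f : E → ℝ} (hfm : Measurable f) : Measurable fun v => ∫ z, f (v + z) ∂μ :=
  (hfm.comp measurable_add).stronglyMeasurable.integral_prod_right'.measurable

end ExpGrowth

lemma exists_norm_le_norm_add_of_drift {E : Type*} [SeminormedAddCommGroup E] {F : E → E}
    (hFloc : ∀ R : ℝ, ∃ M : ℝ, ∀ x, ‖x‖ ≤ R → ‖F x‖ ≤ M) {p : ℝ} (hp : 1 ≤ p)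
    (hdrift : ∀ M : ℝ, ∃ R : ℝ, ∀ x, R ≤ ‖x‖ → M ≤ ‖x‖ - p * ‖F x‖) :
    ∃ c, ∀ x, ‖F x‖ ≤ ‖x‖ + c := by
  obtain ⟨R, hR⟩ := hdrift 0
  obtain ⟨M, hM⟩ := hFloc R
  refine ⟨max M 0, fun x => ?_⟩
  rcases le_total R ‖x‖ with hx | hx
  · nlinarith [hR x hx, mul_nonneg (sub_nonneg.2 hp) (norm_nonneg (F x)), le_max_right M 0]
  · linarith [hM x hx, norm_nonneg x, le_max_left M 0]

section FeynmanKac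

variable {Edom : Set (EuclideanSpace ℝ (Fin d))}
  {F : EuclideanSpace ℝ (Fin d) → EuclideanSpace ℝ (Fin d)}
  {G : EuclideanSpace ℝ (Fin d) → ℝ} {γ : Measure (EuclideanSpace ℝ (Fin d))}
  {f g : EuclideanSpace ℝ (Fin d) → ℝ}

lemma FK_succ (n : ℕ) (f : EuclideanSpace ℝ (Fin d) → ℝ) :
    FK Edom F G γ (n + 1) f = FKstep Edom F G γ (FK Edom F G γ n f) :=
  Function.iterate_succ_apply' _ _ _

lemma FKstep_nonneg (hG : ∀ y ∈ Edom, 0 ≤ G y) (hf : ∀ y, 0 ≤ f y)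
    (x : EuclideanSpace ℝ (Fin d)) : 0 ≤ FKstep Edom F G γ f x :=
  integral_nonneg fun _ => indicator_nonneg (fun y hy => mul_nonneg (hG y hy) (hf y)) _

lemma FKstep_const_mul (c : ℝ) (f : EuclideanSpace ℝ (Fin d) → ℝ)
    (x : EuclideanSpace ℝ (Fin d)) :
    FKstep Edom F G γ (fun y => c * f y) x = c * FKstep Edom F G γ f x := by
  simp only [FKstep, ← integral_const_mul, ← indicator_const_mul, mul_left_comm]

lemma FKstep_mono (hG : ∀ y ∈ Edom, 0 ≤ G y) (hf : ∀ y, 0 ≤ f y) (hfg : ∀ y, f y ≤ g y)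
    {x : EuclideanSpace ℝ (Fin d)}
    (hint : Integrable (fun z => Edom.indicator (fun y => G y * g y) (F x + z)) γ) :
    FKstep Edom F G γ f x ≤ FKstep Edom F G γ g x :=
  integral_mono_of_nonneg
    (ae_of_all _ fun _ => indicator_nonneg (fun y hy => mul_nonneg (hG y hy) (hf y)) _) hint
    (ae_of_all _ fun _ => indicator_le_indicator' fun hy =>
      mul_le_mul_of_nonneg_left (hfg _) (hG _ hy))

lemma FK_measurable_hasExpGrowth [SFinite γ] (hEm : MeasurableSet Edom) (hFm : Measurable F)
    {c : ℝ} (hF : ∀ x, ‖F x‖ ≤ ‖x‖ + c) (hGm : Measurable G)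
    (hG : HasExpGrowth (Edom.indicator G))
    (hγ : ∀ k : ℝ, Integrable (fun z => Real.exp (k * ‖z‖)) γ)
    (hfm : Measurable f) (hf : HasExpGrowth f) (n : ℕ) :
    Measurable (FK Edom F G γ n f) ∧ HasExpGrowth (FK Edom F G γ n f) := by
  induction n with
  | zero => exact ⟨hfm, hf⟩
  | succ n ih =>
    have hm : Measurable (Edom.indicator fun y => G y * FK Edom F G γ n f y) :=
      (hGm.mul ih.1).indicator hEm
    rw [FK_succ]
    exact ⟨(measurable_integral_comp_add hm).comp hFm,
      ((hG.indicator_mul ih.2).integral_comp_add hγ).comp_of_norm_le hF⟩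

lemma integrable_FK_integrand [SFinite γ] (hEm : MeasurableSet Edom) (hFm : Measurable F)
    {c : ℝ} (hF : ∀ x, ‖F x‖ ≤ ‖x‖ + c) (hGm : Measurable G)
    (hG : HasExpGrowth (Edom.indicator G))
    (hγ : ∀ k : ℝ, Integrable (fun z => Real.exp (k * ‖z‖)) γ)
    (hfm : Measurable f) (hf : HasExpGrowth f) (n : ℕ) (x : EuclideanSpace ℝ (Fin d)) :
    Integrable (fun z => Edom.indicator (fun y => G y * FK Edom F G γ n f y) (F x + z)) γ :=
  have hFK := FK_measurable_hasExpGrowth hEm hFm hF hGm hG hγ hfm hf n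
  (hG.indicator_mul hFK.2).integrable_comp_add hγ ((hGm.mul hFK.1).indicator hEm) (F x)

lemma pow_mul_le_FK (hG : ∀ y ∈ Edom, 0 ≤ G y) {θ : ℝ} (hθ : 0 ≤ θ) (hf : ∀ y, 0 ≤ f y)
    (hθf : ∀ y, θ * f y ≤ FKstep Edom F G γ f y)
    (hint : ∀ n x, Integrable
      (fun z => Edom.indicator (fun y => G y * FK Edom F G γ n f y) (F x + z)) γ)
    (n : ℕ) (y : EuclideanSpace ℝ (Fin d)) : θ ^ n * f y ≤ FK Edom F G γ n f y := by
  induction n generalizing y with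
  | zero => simp [FK]
  | succ n ih =>
    calc θ ^ (n + 1) * f y = θ ^ n * (θ * f y) := by ring
      _ ≤ θ ^ n * FKstep Edom F G γ f y := by gcongr; exact hθf y
      _ = FKstep Edom F G γ (fun y => θ ^ n * f y) y := (FKstep_const_mul _ _ _).symm
      _ ≤ FKstep Edom F G γ (FK Edom F G γ n f) y :=
        FKstep_mono hG (fun y => mul_nonneg (pow_nonneg hθ n) (hf y)) ih (hint n y)
      _ = FK Edom F G γ (n + 1) f y := by rw [FK_succ]

lemma sInf_mul_indicator_le_FKstep (hG : ∀ y ∈ Edom, 0 ≤ G y)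
    (B : Set (EuclideanSpace ℝ (Fin d))) (y : EuclideanSpace ℝ (Fin d)) :
    sInf ((fun x => FKstep Edom F G γ (B.indicator fun _ => 1) x) '' B) *
        B.indicator (fun _ => 1) y ≤ FKstep Edom F G γ (B.indicator fun _ => 1) y := by
  have h1 : ∀ y, 0 ≤ B.indicator (fun _ => (1 : ℝ)) y := indicator_nonneg fun _ _ => zero_le_one
  by_cases hy : y ∈ B
  · rw [indicator_of_mem hy, mul_one]
    exact csInf_le ⟨0, by rintro _ ⟨x, -, rfl⟩; exact FKstep_nonneg hG h1 x⟩ ⟨y, hy, rfl⟩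
  · rw [indicator_of_notMem hy, mul_zero]
    exact FKstep_nonneg hG h1 y

lemma mul_measureReal_le_FKstep_indicator [IsFiniteMeasure γ]
    {B : Set (EuclideanSpace ℝ (Fin d))} (hBm : MeasurableSet B) (hBE : B ⊆ Edom)
    {g₀ ε r : ℝ} (hg₀ : 0 ≤ g₀) (hε : 0 ≤ ε) (hGB : ∀ y ∈ B, g₀ ≤ G y)
    (hγ : ∀ A ⊆ Metric.closedBall 0 r, ENNReal.ofReal ε * volume A ≤ γ A)
    {x : EuclideanSpace ℝ (Fin d)} (hx : ∀ z, F x + z ∈ B → ‖z‖ ≤ r)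
    (hint : Integrable
      (fun z => Edom.indicator (fun y => G y * B.indicator (fun _ => (1 : ℝ)) y) (F x + z)) γ) :
    g₀ * ε * volume.real B ≤ FKstep Edom F G γ (B.indicator fun _ => 1) x := by
  have hind : Edom.indicator (fun y => G y * B.indicator (fun _ => (1 : ℝ)) y) = B.indicator G := by
    funext y
    by_cases hyB : y ∈ B
    · simp [hyB, hBE hyB]
    · by_cases hyE : y ∈ Edom <;> simp [hyB, hyE]
  set A := (fun z => F x + z) ⁻¹' B
  have hAm : MeasurableSet A := measurable_const_add _ hBm
  have hγA : ε * volume.real B ≤ γ.real A := by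
    have := ENNReal.toReal_mono (measure_ne_top γ A)
      (hγ A fun z hz => mem_closedBall_zero_iff.2 (hx z hz))
    rwa [ENNReal.toReal_mul, ENNReal.toReal_ofReal hε, measure_preimage_add] at this
  rw [hind] at hint
  calc g₀ * ε * volume.real B ≤ g₀ * γ.real A := by rw [mul_assoc]; gcongr
    _ = ∫ z, A.indicator (fun _ => g₀) z ∂γ := by
        rw [integral_indicator_const _ hAm, smul_eq_mul, mul_comm]
    _ ≤ ∫ z, B.indicator G (F x + z) ∂γ :=
        integral_mono_of_nonneg (ae_of_all _ fun z => indicator_nonneg (fun _ _ => hg₀) z) hint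
          (ae_of_all _ fun z => by by_cases hz : F x + z ∈ B <;> simp [A, hz, hGB])
    _ = FKstep Edom F G γ (B.indicator fun _ => 1) x := by simp only [FKstep, hind]

end FeynmanKac

lemma Matrix.PosDef.exists_pos_mul_sq_norm_le {ι : Type*} [Fintype ι] {M : Matrix ι ι ℝ}
    (hM : M.PosDef) :
    ∃ c > 0, ∀ v : EuclideanSpace ℝ ι, c * ‖v‖ ^ 2 ≤ ∑ i, ∑ j, v i * M i j * v j := by
  let Q : EuclideanSpace ℝ ι → ℝ := fun v => ∑ i, ∑ j, v i * M i j * v j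
  have hQ_smul : ∀ (t : ℝ) v, Q (t • v) = t ^ 2 * Q v := fun t v => by
    simp only [Q, PiLp.smul_apply, smul_eq_mul, Finset.mul_sum]
    exact Finset.sum_congr rfl fun i _ => Finset.sum_congr rfl fun j _ => by ring
  have hQ_pos : ∀ v ∈ Metric.sphere (0 : EuclideanSpace ℝ ι) 1, 0 < Q v := fun v hv => by
    refine (hM.dotProduct_mulVec_pos (x := v.ofLp) ?_).trans_eq ?_
    · simpa using Metric.ne_of_mem_sphere hv one_ne_zero
    · simp only [Q, star_trivial, dotProduct, Matrix.mulVec, Finset.mul_sum]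
      exact Finset.sum_congr rfl fun i _ => Finset.sum_congr rfl fun j _ => by ring
  have hQ_cont : Continuous Q := by fun_prop
  obtain ⟨c, hc, hcQ⟩ :=
    (isCompact_sphere 0 1).exists_forall_le' hQ_cont.continuousOn hQ_pos
  refine ⟨c, hc, fun v => ?_⟩
  rcases eq_or_ne v 0 with rfl | hv
  · simp
  · have hvn : 0 < ‖v‖ := norm_pos_iff.2 hv
    have hu : ‖v‖⁻¹ • v ∈ Metric.sphere (0 : EuclideanSpace ℝ ι) 1 := by
      simp [norm_smul, hvn.ne']
    have := hcQ _ hu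
    rw [hQ_smul, inv_pow] at this
    calc c * ‖v‖ ^ 2 ≤ (‖v‖ ^ 2)⁻¹ * Q v * ‖v‖ ^ 2 := by gcongr
      _ = Q v := by field_simp

lemma integrable_exp_neg_mul_sq_norm_add_mul_norm {V : Type*} [NormedAddCommGroup V]
    [InnerProductSpace ℝ V] [FiniteDimensional ℝ V] [MeasurableSpace V] [BorelSpace V]
    {b : ℝ} (hb : 0 < b) (k : ℝ) :
    Integrable fun v : V => Real.exp (-b * ‖v‖ ^ 2 + k * ‖v‖) := by
  have hgauss : Integrable fun v : V => Real.exp (-(b / 2) * ‖v‖ ^ 2) := by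
    simpa [Complex.norm_exp, ← Complex.ofReal_pow] using
      (GaussianFourier.integrable_cexp_neg_mul_sq_norm_add (V := V) (b := ((b / 2 : ℝ) : ℂ))
        (by simpa using hb) 0 0).norm
  refine (hgauss.const_mul (Real.exp (k ^ 2 / (2 * b)))).mono' (by fun_prop)
    (ae_of_all _ fun v => ?_)
  rw [Real.norm_eq_abs, Real.abs_exp, ← Real.exp_add, Real.exp_le_exp]
  have : k ^ 2 / (2 * b) + -(b / 2) * ‖v‖ ^ 2 - (-b * ‖v‖ ^ 2 + k * ‖v‖)
      = (b * ‖v‖ - k) ^ 2 / (2 * b) := by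
    field_simp; ring
  linarith [show 0 ≤ (b * ‖v‖ - k) ^ 2 / (2 * b) by positivity]

/-- The density appearing in `IsNondegGaussian`, so that there
`γ = volume.withDensity (ENNReal.ofReal ∘ gaussianPDF m Cov)` holds definitionally. -/
def gaussianPDF (m : EuclideanSpace ℝ (Fin d)) (Cov : Matrix (Fin d) (Fin d) ℝ)
    (z : EuclideanSpace ℝ (Fin d)) : ℝ :=
  (Real.sqrt ((2 * Real.pi) ^ d * Cov.det))⁻¹ *
    Real.exp (-(∑ i, ∑ j, (z i - m i) * Cov⁻¹ i j * (z j - m j)) / 2)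

section Gaussian

variable {m : EuclideanSpace ℝ (Fin d)} {Cov : Matrix (Fin d) (Fin d) ℝ}

lemma continuous_gaussianPDF : Continuous (gaussianPDF m Cov) := by
  unfold gaussianPDF
  fun_prop

lemma gaussianPDF_pos (hCov : Cov.PosDef) (z : EuclideanSpace ℝ (Fin d)) :
    0 < gaussianPDF m Cov z := by
  have := hCov.det_pos
  unfold gaussianPDF
  positivity

lemma exists_gaussianPDF_le (hCov : Cov.PosDef) :
    ∃ K b : ℝ, 0 < b ∧ ∀ z, gaussianPDF m Cov z ≤ K * Real.exp (-b * ‖z - m‖ ^ 2) := by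
  obtain ⟨c, hc, hcQ⟩ := hCov.inv.exists_pos_mul_sq_norm_le
  refine ⟨(Real.sqrt ((2 * Real.pi) ^ d * Cov.det))⁻¹, c / 2, by positivity, fun z => ?_⟩
  have hQ := hcQ (z - m)
  simp only [PiLp.sub_apply] at hQ
  unfold gaussianPDF
  gcongr
  linarith

end Gaussian

namespace IsNondegGaussian

variable {γ : Measure (EuclideanSpace ℝ (Fin d))}

lemma integrable_exp_mul_norm (hγ : IsNondegGaussian γ) (k : ℝ) :
    Integrable (fun z => Real.exp (k * ‖z‖)) γ := by
  obtain ⟨m, Cov, hCov, rfl⟩ := hγ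
  change Integrable _ (volume.withDensity fun z => ENNReal.ofReal (gaussianPDF m Cov z))
  obtain ⟨K, b, hb, hK⟩ := exists_gaussianPDF_le (m := m) hCov
  have hpdf : Measurable (gaussianPDF m Cov) := continuous_gaussianPDF.measurable
  rw [integrable_withDensity_iff hpdf.ennreal_ofReal (ae_of_all _ fun _ => ENNReal.ofReal_lt_top)]
  have hdom : Integrable fun z => K * Real.exp (|k| * ‖m‖) *
      Real.exp (-b * ‖z - m‖ ^ 2 + |k| * ‖z - m‖) :=
    ((integrable_exp_neg_mul_sq_norm_add_mul_norm hb |k|).comp_sub_right m).const_mul _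
  refine hdom.mono' (by fun_prop) (ae_of_all _ fun z => ?_)
  have hz : k * ‖z‖ ≤ |k| * ‖z - m‖ + |k| * ‖m‖ := by
    have := norm_sub_norm_le z m
    nlinarith [le_abs_self k, abs_nonneg k, norm_nonneg z]
  have hpos := gaussianPDF_pos (m := m) hCov z
  rw [ENNReal.toReal_ofReal hpos.le, Real.norm_eq_abs, abs_of_pos (by positivity)]
  calc Real.exp (k * ‖z‖) * gaussianPDF m Cov z
      ≤ Real.exp (|k| * ‖z - m‖ + |k| * ‖m‖) * (K * Real.exp (-b * ‖z - m‖ ^ 2)) :=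
        mul_le_mul (Real.exp_le_exp.2 hz) (hK z) hpos.le (Real.exp_pos _).le
    _ = K * Real.exp (|k| * ‖m‖) * Real.exp (-b * ‖z - m‖ ^ 2 + |k| * ‖z - m‖) := by
        simp only [Real.exp_add]; ring

lemma isFiniteMeasure (hγ : IsNondegGaussian γ) : IsFiniteMeasure γ :=
  (integrable_const_iff_isFiniteMeasure one_ne_zero).1 (by simpa using hγ.integrable_exp_mul_norm 0)

lemma exists_pos_mul_volume_le (hγ : IsNondegGaussian γ) (r : ℝ) :
    ∃ ε > 0, ∀ A ⊆ Metric.closedBall (0 : EuclideanSpace ℝ (Fin d)) r,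
      ENNReal.ofReal ε * volume A ≤ γ A := by
  obtain ⟨m, Cov, hCov, rfl⟩ := hγ
  obtain ⟨ε, hε, hεle⟩ := (isCompact_closedBall 0 r).exists_forall_le'
    (continuous_gaussianPDF (m := m) (Cov := Cov)).continuousOn fun z _ => gaussianPDF_pos hCov z
  refine ⟨ε, hε, fun A hA => ?_⟩
  change _ ≤ volume.withDensity (fun z => ENNReal.ofReal (gaussianPDF m Cov z)) A
  rw [withDensity_apply' _ A, ← setLIntegral_const]
  exact setLIntegral_mono continuous_gaussianPDF.measurable.ennreal_ofReal
    fun z hz => ENNReal.ofReal_le_ofReal (hεle z (hA hz))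

end IsNondegGaussian

lemma exists_pos_le_FKstep_indicator {Edom : Set (EuclideanSpace ℝ (Fin d))}
    {F : EuclideanSpace ℝ (Fin d) → EuclideanSpace ℝ (Fin d)}
    {G : EuclideanSpace ℝ (Fin d) → ℝ} {γ : Measure (EuclideanSpace ℝ (Fin d))}
    (hγ : IsNondegGaussian γ) {B : Set (EuclideanSpace ℝ (Fin d))} (hBm : MeasurableSet B)
    (hBE : B ⊆ Edom) {R : ℝ} (hBR : B ⊆ Metric.closedBall 0 R) (hB : 0 < volume B)
    (hFloc : ∀ R : ℝ, ∃ M : ℝ, ∀ x, ‖x‖ ≤ R → ‖F x‖ ≤ M) (hGpos : ∀ x ∈ Edom, 0 < G x)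
    (hGinvloc : ∀ R : ℝ, ∃ M : ℝ, ∀ x ∈ Edom, ‖x‖ ≤ R → 1 / G x ≤ M)
    (hint : ∀ x, Integrable
      (fun z => Edom.indicator (fun y => G y * B.indicator (fun _ => (1 : ℝ)) y) (F x + z)) γ) :
    ∃ θ > 0, ∀ x ∈ B, θ ≤ FKstep Edom F G γ (B.indicator fun _ => 1) x := by
  have := hγ.isFiniteMeasure
  obtain ⟨M, hM⟩ := hFloc R
  obtain ⟨M', hM'⟩ := hGinvloc R
  obtain ⟨ε, hε, hεγ⟩ := hγ.exists_pos_mul_volume_le (R + M)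
  have hGB : ∀ y ∈ B, 1 / max M' 1 ≤ G y := fun y hy => by
    rw [one_div_le (by positivity) (hGpos y (hBE hy))]
    exact (hM' y (hBE hy) (mem_closedBall_zero_iff.1 (hBR hy))).trans (le_max_left _ _)
  have hBreal : 0 < volume.real B :=
    ENNReal.toReal_pos hB.ne' ((measure_mono hBR).trans_lt measure_closedBall_lt_top).ne
  refine ⟨1 / max M' 1 * ε * volume.real B, by positivity, fun x hx =>
    mul_measureReal_le_FKstep_indicator hBm hBE (by positivity) hε.le hGB hεγ
      (fun z hz => ?_) (hint x)⟩
  calc ‖z‖ = ‖(F x + z) - F x‖ := by rw [add_sub_cancel_left]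
    _ ≤ ‖F x + z‖ + ‖F x‖ := norm_sub_le _ _
    _ ≤ R + M := add_le_add (mem_closedBall_zero_iff.1 (hBR hz))
        (hM x (mem_closedBall_zero_iff.1 (hBR hx)))

theorem FK_mass_on_unit_ball_general
    (Edom : Set (EuclideanSpace ℝ (Fin d)))
    (hEm : MeasurableSet Edom)
    (F : EuclideanSpace ℝ (Fin d) → EuclideanSpace ℝ (Fin d))
    (hFm : Measurable F)
    (hFloc : ∀ R : ℝ, ∃ M : ℝ, ∀ x, ‖x‖ ≤ R → ‖F x‖ ≤ M)
    (G : EuclideanSpace ℝ (Fin d) → ℝ)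
    (hGm : Measurable G) (hGpos : ∀ x ∈ Edom, 0 < G x)
    (hGinvloc : ∀ R : ℝ, ∃ M : ℝ, ∀ x ∈ Edom, ‖x‖ ≤ R → 1 / G x ≤ M)
    (C : ℝ) (hC : 0 < C) (hGgrowth : ∀ x ∈ Edom, G x ≤ C * Real.exp ‖x‖)
    (p : ℝ) (hp : 1 < p)
    (hdrift : ∀ M : ℝ, ∃ R : ℝ, ∀ x, R ≤ ‖x‖ → M ≤ ‖x‖ - p * ‖F x‖)
    (γ : Measure (EuclideanSpace ℝ (Fin d))) (hγ : IsNondegGaussian γ)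
    (hB : 0 < volume (Metric.ball (0 : EuclideanSpace ℝ (Fin d)) 1 ∩ Edom)) :
    0 < sInf ((fun x => FK Edom F G γ 1
        ((Metric.ball (0 : EuclideanSpace ℝ (Fin d)) 1 ∩ Edom).indicator
          fun _ => (1:ℝ)) x) '' (Metric.ball (0 : EuclideanSpace ℝ (Fin d)) 1 ∩ Edom)) ∧
      ∀ n : ℕ, 1 ≤ n → ∀ x ∈ Metric.ball (0 : EuclideanSpace ℝ (Fin d)) 1 ∩ Edom,
        (sInf ((fun x => FK Edom F G γ 1
            ((Metric.ball (0 : EuclideanSpace ℝ (Fin d)) 1 ∩ Edom).indicator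
              fun _ => (1:ℝ)) x) '' (Metric.ball (0 : EuclideanSpace ℝ (Fin d)) 1 ∩ Edom))) ^ n ≤
          FK Edom F G γ n
            ((Metric.ball (0 : EuclideanSpace ℝ (Fin d)) 1 ∩ Edom).indicator
              fun _ => (1:ℝ)) x := by
  set B := Metric.ball (0 : EuclideanSpace ℝ (Fin d)) 1 ∩ Edom
  have hBm : MeasurableSet B := measurableSet_ball.inter hEm
  have hG0 : ∀ y ∈ Edom, 0 ≤ G y := fun y hy => (hGpos y hy).le
  have := hγ.isFiniteMeasure
  obtain ⟨c, hc⟩ := exists_norm_le_norm_add_of_drift hFloc hp.le hdrift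
  have hGexp : HasExpGrowth (Edom.indicator G) := hasExpGrowth_indicator_of_le hC.le hG0 hGgrowth
  have hint := integrable_FK_integrand hEm hFm hc hGm hGexp hγ.integrable_exp_mul_norm
    (measurable_const.indicator hBm) ((hasExpGrowth_const 1).indicator B)
  obtain ⟨θ₀, hθ₀, hθ₀B⟩ := exists_pos_le_FKstep_indicator hγ hBm inter_subset_right
    (fun y hy => Metric.ball_subset_closedBall hy.1) hB hFloc hGpos hGinvloc (hint 0)
  have hθ₀θ : θ₀ ≤ sInf ((fun x => FK Edom F G γ 1 (B.indicator fun _ => 1) x) '' B) :=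
    le_csInf ((nonempty_of_measure_ne_zero hB.ne').image _)
      (by rintro _ ⟨x, hx, rfl⟩; exact hθ₀B x hx)
  refine ⟨hθ₀.trans_le hθ₀θ, fun n _ x hx => ?_⟩
  have := pow_mul_le_FK hG0 (hθ₀.le.trans hθ₀θ) (indicator_nonneg fun _ _ => zero_le_one)
    (sInf_mul_indicator_le_FKstep hG0 B) hint n x
  rwa [indicator_of_mem hx, mul_one] at this

/-- Mass creation on the unit ball: under assumptions (H), if `B := B(0,1) ∩ E` has
positive Lebesgue measure, then `θ₂' := inf_{x ∈ B} P_1 1_B(x)` is positive and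
`P_n 1_B ≥ (θ₂')^n` on `B` for all `n ≥ 1`. -/
theorem FK_mass_on_unit_ball
    (Edom : Set (EuclideanSpace ℝ (Fin d)))
    (hEm : MeasurableSet Edom) (hEpos : 0 < volume Edom)
    (F : EuclideanSpace ℝ (Fin d) → EuclideanSpace ℝ (Fin d))
    (hFm : Measurable F)
    (hFloc : ∀ R : ℝ, ∃ M : ℝ, ∀ x, ‖x‖ ≤ R → ‖F x‖ ≤ M)
    (G : EuclideanSpace ℝ (Fin d) → ℝ)
    (hGm : Measurable G) (hGpos : ∀ x ∈ Edom, 0 < G x)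
    (hGinvloc : ∀ R : ℝ, ∃ M : ℝ, ∀ x ∈ Edom, ‖x‖ ≤ R → 1 / G x ≤ M)
    (C : ℝ) (hC : 0 < C) (hGgrowth : ∀ x ∈ Edom, G x ≤ C * Real.exp ‖x‖)
    (p : ℝ) (hp : 1 < p)
    (hdrift : ∀ M : ℝ, ∃ R : ℝ, ∀ x, R ≤ ‖x‖ → M ≤ ‖x‖ - p * ‖F x‖)
    (γ : Measure (EuclideanSpace ℝ (Fin d))) (hγ : IsNondegGaussian γ)
    (hB : 0 < volume (Metric.ball (0 : EuclideanSpace ℝ (Fin d)) 1 ∩ Edom)) :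
    0 < sInf ((fun x => FK Edom F G γ 1
        ((Metric.ball (0 : EuclideanSpace ℝ (Fin d)) 1 ∩ Edom).indicator
          fun _ => (1:ℝ)) x) '' (Metric.ball (0 : EuclideanSpace ℝ (Fin d)) 1 ∩ Edom)) ∧
      ∀ n : ℕ, 1 ≤ n → ∀ x ∈ Metric.ball (0 : EuclideanSpace ℝ (Fin d)) 1 ∩ Edom,
        (sInf ((fun x => FK Edom F G γ 1
            ((Metric.ball (0 : EuclideanSpace ℝ (Fin d)) 1 ∩ Edom).indicator
              fun _ => (1:ℝ)) x) '' (Metric.ball (0 : EuclideanSpace ℝ (Fin d)) 1 ∩ Edom))) ^ n ≤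
          FK Edom F G γ n
            ((Metric.ball (0 : EuclideanSpace ℝ (Fin d)) 1 ∩ Edom).indicator
              fun _ => (1:ℝ)) x :=
  FK_mass_on_unit_ball_general Edom hEm F hFm hFloc G hGm hGpos hGinvloc C hC hGgrowth p hp hdrift γ
    hγ hB
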